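/- Let Q be a compact polyhedron and let G : Q → (ℝ^m)³ ∖ (Δ^{1=2} ∪ Δ^{2=3} ∪ Δ^{3=1}) be a map such that its composition with each projection p_i forgetting the i-th point, p_i : (ℝ^m)³ ∖ (⋃ Δ^{i=j}) → (ℝ^m)² ∖ Δ, is null-homotopic. Then there exists a hexagonal ∂I³-homotopy H_T : Q → (ℝ^m)³ ∖ Δ^{1=2=3} with H_{(0,0,0)} = G and H_{(1,1,1)} a constant map into (ℝ^m)³ ∖ (Δ^{1=2} ∪ Δ^{2=3} ∪ Δ^{3=1}). -/

import Mathlib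

open Metric Set unitInterval

noncomputable section

abbrev E (m : ℕ) : Type := EuclideanSpace ℝ (Fin m)

/-- The complement of all three partial diagonals in `(ℝ^m)³`:
triples of pairwise distinct points. -/
def Conf3 (m : ℕ) : Set (E m × E m × E m) :=
  {p | p.1 ≠ p.2.1 ∧ p.2.1 ≠ p.2.2 ∧ p.1 ≠ p.2.2}

/-- The complement of the diagonal in `(ℝ^m)²`. -/
def Conf2 (m : ℕ) : Set (E m × E m) := {q | q.1 ≠ q.2}

/-- The complement of the thin diagonal `Δ^{1=2=3}` in `(ℝ^m)³`. -/
def ThinDiagCompl (m : ℕ) : Set (E m × E m × E m) :=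
  {p | ¬ (p.1 = p.2.1 ∧ p.2.1 = p.2.2)}

/-- `p₁`: forget the first point of the configuration. -/
def proj1 (m : ℕ) : C(Conf3 m, Conf2 m) :=
  ⟨fun p => ⟨(p.1.2.1, p.1.2.2), p.2.2.1⟩,
    (Continuous.prodMk (continuous_subtype_val.snd.fst)
      (continuous_subtype_val.snd.snd)).subtype_mk _⟩

/-- `p₂`: forget the second point of the configuration. -/
def proj2 (m : ℕ) : C(Conf3 m, Conf2 m) :=
  ⟨fun p => ⟨(p.1.1, p.1.2.2), p.2.2.2⟩,
    (Continuous.prodMk (continuous_subtype_val.fst)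
      (continuous_subtype_val.snd.snd)).subtype_mk _⟩

/-- `p₃`: forget the third point of the configuration. -/
def proj3 (m : ℕ) : C(Conf3 m, Conf2 m) :=
  ⟨fun p => ⟨(p.1.1, p.1.2.1), p.2.1⟩,
    (Continuous.prodMk (continuous_subtype_val.fst)
      (continuous_subtype_val.snd.fst)).subtype_mk _⟩

/-- The boundary `∂I³` of the cube `I³`. -/
def BdryCube : Type :=
  {T : I × I × I // T.1 = 0 ∨ T.1 = 1 ∨ T.2.1 = 0 ∨ T.2.1 = 1 ∨ T.2.2 = 0 ∨ T.2.2 = 1}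

instance : TopologicalSpace BdryCube := by unfold BdryCube; infer_instance

/-- The vertex `(0,0,0) ∈ ∂I³`. -/
def corner0 : BdryCube := ⟨(0, 0, 0), Or.inl rfl⟩

/-- The vertex `(1,1,1) ∈ ∂I³`. -/
def corner1 : BdryCube := ⟨(1, 1, 1), Or.inr (Or.inl rfl)⟩

/-- A `∂I³`-family `H : Q × ∂I³ → (ℝ^m)³ ∖ Δ^{1=2=3}` is *hexagonal* if
`H_T(Q) ∩ Δ^{i=j} = ∅` whenever `T` lies on either of the faces `t_k = 0`, `t_k = 1`
(`{i,j,k} = {1,2,3}`), and `H_T(Q) ⊆ (ℝ^m)³ ∖ (Δ^{1=2} ∪ Δ^{2=3} ∪ Δ^{3=1})`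
whenever `T` lies on an edge `t_i = t_j = 0` or `t_i = t_j = 1`. -/
def IsHexagonal {Q : Type} [TopologicalSpace Q] {m : ℕ}
    (H : C(Q × BdryCube, ThinDiagCompl m)) : Prop :=
  -- faces `t₃ ∈ {0,1}` avoid `Δ^{1=2}`:
  (∀ q (T : BdryCube), T.1.2.2 = 0 ∨ T.1.2.2 = 1 →
    (H (q, T)).1.1 ≠ (H (q, T)).1.2.1) ∧
  -- faces `t₁ ∈ {0,1}` avoid `Δ^{2=3}`:
  (∀ q (T : BdryCube), T.1.1 = 0 ∨ T.1.1 = 1 →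
    (H (q, T)).1.2.1 ≠ (H (q, T)).1.2.2) ∧
  -- faces `t₂ ∈ {0,1}` avoid `Δ^{3=1}`:
  (∀ q (T : BdryCube), T.1.2.1 = 0 ∨ T.1.2.1 = 1 →
    (H (q, T)).1.1 ≠ (H (q, T)).1.2.2) ∧
  -- on edges `t_i = t_j = 0` and `t_i = t_j = 1`, all diagonals are avoided:
  (∀ q (T : BdryCube),
    ((T.1.1 = 0 ∧ T.1.2.1 = 0) ∨ (T.1.1 = 1 ∧ T.1.2.1 = 1) ∨
     (T.1.1 = 0 ∧ T.1.2.2 = 0) ∨ (T.1.1 = 1 ∧ T.1.2.2 = 1) ∨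
     (T.1.2.1 = 0 ∧ T.1.2.2 = 0) ∨ (T.1.2.1 = 1 ∧ T.1.2.2 = 1)) →
    (H (q, T)).1 ∈ Conf3 m)

/-!
Write a triple as `(y + d₁₂, y, y - d₂₃)`: the partial diagonals become `d₁₂ = 0`, `d₂₃ = 0`
and `d₁₂ + d₂₃ = 0`. Homotopies from `pᵢ ∘ G` to the constant map at `pᵢ (G q₀)` give three
nowhere-vanishing difference tracks `u₂₃, u₁₃, u₁₂ : I × Q → ℝ^m` with `u₁₃ = u₁₂ + u₂₃` at both
ends. A point `T` of the cube reads the tracks at the median of its coordinates, which is `0` or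
`1` on every edge `tᵢ = tⱼ ∈ {0,1}`. The defect `u₁₃ - u₁₂ - u₂₃` is shared between `d₁₂` and
`d₂₃` with the weights `φ(t₃)/Σφ(tᵢ)` and `φ(t₁)/Σφ(tᵢ)`, `φ(t) = t(1-t)`, so that `d₁₂ = u₁₂` on
the faces `t₃ ∈ {0,1}`, `d₂₃ = u₂₃` on the faces `t₁ ∈ {0,1}` and `d₁₂ + d₂₃ = u₁₃` on the faces
`t₂ ∈ {0,1}`.
-/

open Filter Topology

section Median

variable {α : Type*} [LinearOrder α] {a b c : α}

def median3 (a b c : α) : α := max (min a b) (min (max a b) c)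

lemma median3_eq_of_eq₁₂ (h : a = b) : median3 a b c = a := by
  subst h; simp [median3]

lemma median3_eq_of_eq₁₃ (h : a = c) : median3 a b c = a := by
  subst h; simp [median3]

lemma median3_eq_of_eq₂₃ (h : b = c) : median3 a b c = b := by
  subst h; simp [median3]

end Median

lemma continuous_smul_of_bounded_of_continuousAt {Y V : Type*} [TopologicalSpace Y]
    [SeminormedAddCommGroup V] [NormedSpace ℝ V] {w : Y → ℝ} {f : Y → V} {C : ℝ}
    (hf : Continuous f) (hw : ∀ y, ‖w y‖ ≤ C) (hwf : ∀ y, f y ≠ 0 → ContinuousAt w y) :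
    Continuous fun y => w y • f y := by
  refine continuous_iff_continuousAt.2 fun y => ?_
  by_cases hy : f y = 0
  · have hf0 : Tendsto f (𝓝 y) (𝓝 0) := hy ▸ hf.continuousAt
    simpa [ContinuousAt, hy] using (isBoundedUnder_of ⟨C, hw⟩).smul_tendsto_zero hf0
  · exact (hwf y hy).smul hf.continuousAt

lemma ContinuousMap.Nullhomotopic.homotopic_const_apply {X Y : Type*} [TopologicalSpace X]
    [TopologicalSpace Y] {f : C(X, Y)} (hf : f.Nullhomotopic) (x₀ : X) :
    f.Homotopic (.const X (f x₀)) := by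
  obtain ⟨y, hy⟩ := hf
  have hx₀ := hy.comp (.refl (.const X x₀))
  rw [comp_const, const_comp] at hx₀
  exact hy.trans hx₀.symm

namespace HexagonalHomotopy

def cubeMedian (T : I × I × I) : I := median3 T.1 T.2.1 T.2.2

@[fun_prop]
lemma continuous_cubeMedian : Continuous cubeMedian := by
  unfold cubeMedian median3; fun_prop

lemma cubeMedian_eq_zero_or_one_of_edge {T : I × I × I}
    (h : (T.1 = 0 ∧ T.2.1 = 0) ∨ (T.1 = 1 ∧ T.2.1 = 1) ∨
      (T.1 = 0 ∧ T.2.2 = 0) ∨ (T.1 = 1 ∧ T.2.2 = 1) ∨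
      (T.2.1 = 0 ∧ T.2.2 = 0) ∨ (T.2.1 = 1 ∧ T.2.2 = 1)) :
    cubeMedian T = 0 ∨ cubeMedian T = 1 := by
  rcases h with ⟨h, h'⟩ | ⟨h, h'⟩ | ⟨h, h'⟩ | ⟨h, h'⟩ | ⟨h, h'⟩ | ⟨h, h'⟩
  · exact .inl (h ▸ median3_eq_of_eq₁₂ (h.trans h'.symm))
  · exact .inr (h ▸ median3_eq_of_eq₁₂ (h.trans h'.symm))
  · exact .inl (h ▸ median3_eq_of_eq₁₃ (h.trans h'.symm))
  · exact .inr (h ▸ median3_eq_of_eq₁₃ (h.trans h'.symm))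
  · exact .inl (h ▸ median3_eq_of_eq₂₃ (h.trans h'.symm))
  · exact .inr (h ▸ median3_eq_of_eq₂₃ (h.trans h'.symm))

lemma cubeMedian_eq_zero_or_one_of_vertex {T : I × I × I} (h₁ : T.1 = 0 ∨ T.1 = 1)
    (h₂ : T.2.1 = 0 ∨ T.2.1 = 1) (h₃ : T.2.2 = 0 ∨ T.2.2 = 1) :
    cubeMedian T = 0 ∨ cubeMedian T = 1 := by
  apply cubeMedian_eq_zero_or_one_of_edge
  rcases h₁ with h₁ | h₁ <;> rcases h₂ with h₂ | h₂ <;> rcases h₃ with h₃ | h₃ <;> simp [h₁, h₂, h₃]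

def bump (t : I) : ℝ := t * (1 - t)

lemma bump_nonneg (t : I) : 0 ≤ bump t := mul_nonneg t.2.1 (sub_nonneg.2 t.2.2)

lemma bump_eq_zero_iff {t : I} : bump t = 0 ↔ t = 0 ∨ t = 1 := by
  rw [bump, mul_eq_zero, sub_eq_zero, eq_comm (a := (1 : ℝ)), Icc.coe_eq_zero, Icc.coe_eq_one]

@[fun_prop]
lemma continuous_bump : Continuous bump := by unfold bump; fun_prop

def cubeBump (T : I × I × I) : ℝ := bump T.1 + bump T.2.1 + bump T.2.2

@[fun_prop]
lemma continuous_cubeBump : Continuous cubeBump := by unfold cubeBump; fun_prop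

lemma cubeMedian_eq_zero_or_one_of_cubeBump_eq_zero {T : I × I × I} (h : cubeBump T = 0) :
    cubeMedian T = 0 ∨ cubeMedian T = 1 := by
  have := bump_nonneg T.1; have := bump_nonneg T.2.1; have := bump_nonneg T.2.2
  unfold cubeBump at h
  exact cubeMedian_eq_zero_or_one_of_vertex (bump_eq_zero_iff.1 (by linarith))
    (bump_eq_zero_iff.1 (by linarith)) (bump_eq_zero_iff.1 (by linarith))

section SeparationFields

variable {X V : Type*} [AddCommGroup V] {u₁₂ u₂₃ u₁₃ : I × X → V}

variable (u₁₂ u₂₃ u₁₃) in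
def defect (p : X × (I × I × I)) : V :=
  u₁₃ (cubeMedian p.2, p.1) - u₁₂ (cubeMedian p.2, p.1) - u₂₃ (cubeMedian p.2, p.1)

lemma defect_eq_zero (hu : ∀ s x, (s = 0 ∨ s = 1) → u₁₃ (s, x) = u₁₂ (s, x) + u₂₃ (s, x))
    {p : X × (I × I × I)} (h : cubeMedian p.2 = 0 ∨ cubeMedian p.2 = 1) :
    defect u₁₂ u₂₃ u₁₃ p = 0 := by
  rw [defect, hu _ _ h, add_sub_cancel_left, sub_self]

variable [Module ℝ V]

/- At the vertices of the cube `cubeBump` vanishes and the weights take the junk value `0 / 0 = 0`;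
the defect vanishes there anyway. -/
variable (u₁₂ u₂₃ u₁₃) in
def diff₁₂ (p : X × (I × I × I)) : V :=
  u₁₂ (cubeMedian p.2, p.1) + (bump p.2.2.2 / cubeBump p.2) • defect u₁₂ u₂₃ u₁₃ p

variable (u₁₂ u₂₃ u₁₃) in
def diff₂₃ (p : X × (I × I × I)) : V :=
  u₂₃ (cubeMedian p.2, p.1) + (bump p.2.1 / cubeBump p.2) • defect u₁₂ u₂₃ u₁₃ p

variable {p : X × (I × I × I)}

lemma diff₁₂_of_face (h : p.2.2.2 = 0 ∨ p.2.2.2 = 1) :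
    diff₁₂ u₁₂ u₂₃ u₁₃ p = u₁₂ (cubeMedian p.2, p.1) := by
  rw [diff₁₂, bump_eq_zero_iff.2 h, zero_div, zero_smul, add_zero]

lemma diff₂₃_of_face (h : p.2.1 = 0 ∨ p.2.1 = 1) :
    diff₂₃ u₁₂ u₂₃ u₁₃ p = u₂₃ (cubeMedian p.2, p.1) := by
  rw [diff₂₃, bump_eq_zero_iff.2 h, zero_div, zero_smul, add_zero]

lemma diff₁₂_add_diff₂₃_of_face
    (hu : ∀ s x, (s = 0 ∨ s = 1) → u₁₃ (s, x) = u₁₂ (s, x) + u₂₃ (s, x))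
    (h : p.2.2.1 = 0 ∨ p.2.2.1 = 1) :
    diff₁₂ u₁₂ u₂₃ u₁₃ p + diff₂₃ u₁₂ u₂₃ u₁₃ p = u₁₃ (cubeMedian p.2, p.1) := by
  -- off the vertices the two weights sum to one; at the vertices the defect vanishes
  have hw : (bump p.2.2.2 / cubeBump p.2 + bump p.2.1 / cubeBump p.2) • defect u₁₂ u₂₃ u₁₃ p =
      defect u₁₂ u₂₃ u₁₃ p := by
    rw [← add_div, show bump p.2.2.2 + bump p.2.1 = cubeBump p.2 by
      rw [cubeBump, bump_eq_zero_iff.2 h]; ring]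
    by_cases hS : cubeBump p.2 = 0
    · rw [defect_eq_zero hu (cubeMedian_eq_zero_or_one_of_cubeBump_eq_zero hS), smul_zero]
    · rw [div_self hS, one_smul]
  calc diff₁₂ u₁₂ u₂₃ u₁₃ p + diff₂₃ u₁₂ u₂₃ u₁₃ p
      = u₁₂ (cubeMedian p.2, p.1) + u₂₃ (cubeMedian p.2, p.1) +
        (bump p.2.2.2 / cubeBump p.2 + bump p.2.1 / cubeBump p.2) • defect u₁₂ u₂₃ u₁₃ p := by
        rw [diff₁₂, diff₂₃, add_smul]; abel
    _ = u₁₃ (cubeMedian p.2, p.1) := by rw [hw, defect]; abel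

lemma diff₁₂_of_cubeMedian (hu : ∀ s x, (s = 0 ∨ s = 1) → u₁₃ (s, x) = u₁₂ (s, x) + u₂₃ (s, x))
    (h : cubeMedian p.2 = 0 ∨ cubeMedian p.2 = 1) :
    diff₁₂ u₁₂ u₂₃ u₁₃ p = u₁₂ (cubeMedian p.2, p.1) := by
  rw [diff₁₂, defect_eq_zero hu h, smul_zero, add_zero]

lemma diff₂₃_of_cubeMedian (hu : ∀ s x, (s = 0 ∨ s = 1) → u₁₃ (s, x) = u₁₂ (s, x) + u₂₃ (s, x))
    (h : cubeMedian p.2 = 0 ∨ cubeMedian p.2 = 1) :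
    diff₂₃ u₁₂ u₂₃ u₁₃ p = u₂₃ (cubeMedian p.2, p.1) := by
  rw [diff₂₃, defect_eq_zero hu h, smul_zero, add_zero]

end SeparationFields

section Continuity

variable {X V : Type*} [TopologicalSpace X] [SeminormedAddCommGroup V] [NormedSpace ℝ V]
  {u₁₂ u₂₃ u₁₃ : I × X → V}

lemma continuous_bump_div_cubeBump_smul_defect (h₁₂ : Continuous u₁₂) (h₂₃ : Continuous u₂₃)
    (h₁₃ : Continuous u₁₃)
    (hu : ∀ s x, (s = 0 ∨ s = 1) → u₁₃ (s, x) = u₁₂ (s, x) + u₂₃ (s, x))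
    {φ : I × I × I → ℝ} (hφ : Continuous φ) (hφ₀ : ∀ T, 0 ≤ φ T) (hφS : ∀ T, φ T ≤ cubeBump T) :
    Continuous fun p : X × (I × I × I) => (φ p.2 / cubeBump p.2) • defect u₁₂ u₂₃ u₁₃ p := by
  refine continuous_smul_of_bounded_of_continuousAt (C := 1) (by unfold defect; fun_prop)
    (fun p => ?_) (fun p hp => ?_)
  · rw [Real.norm_of_nonneg (div_nonneg (hφ₀ _) ((hφ₀ _).trans (hφS _)))]
    exact div_le_one_of_le₀ (hφS _) ((hφ₀ _).trans (hφS _))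
  · have hS : cubeBump p.2 ≠ 0 := fun hS =>
      hp (defect_eq_zero hu (cubeMedian_eq_zero_or_one_of_cubeBump_eq_zero hS))
    exact (hφ.comp continuous_snd).continuousAt.div
      (continuous_cubeBump.comp continuous_snd).continuousAt hS

lemma continuous_diff₁₂ (h₁₂ : Continuous u₁₂) (h₂₃ : Continuous u₂₃) (h₁₃ : Continuous u₁₃)
    (hu : ∀ s x, (s = 0 ∨ s = 1) → u₁₃ (s, x) = u₁₂ (s, x) + u₂₃ (s, x)) :
    Continuous (diff₁₂ u₁₂ u₂₃ u₁₃) :=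
  (h₁₂.comp (by fun_prop)).add (continuous_bump_div_cubeBump_smul_defect h₁₂ h₂₃ h₁₃ hu
    (φ := fun T => bump T.2.2) (by fun_prop) (fun T => bump_nonneg _) fun T => by
      unfold cubeBump; linarith [bump_nonneg T.1, bump_nonneg T.2.1])

lemma continuous_diff₂₃ (h₁₂ : Continuous u₁₂) (h₂₃ : Continuous u₂₃) (h₁₃ : Continuous u₁₃)
    (hu : ∀ s x, (s = 0 ∨ s = 1) → u₁₃ (s, x) = u₁₂ (s, x) + u₂₃ (s, x)) :
    Continuous (diff₂₃ u₁₂ u₂₃ u₁₃) :=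
  (h₂₃.comp (by fun_prop)).add (continuous_bump_div_cubeBump_smul_defect h₁₂ h₂₃ h₁₃ hu
    (φ := fun T => bump T.1) (by fun_prop) (fun T => bump_nonneg _) fun T => by
      unfold cubeBump; linarith [bump_nonneg T.2.1, bump_nonneg T.2.2])

end Continuity

section Configurations

variable {V : Type*} [AddCommGroup V]

def ofDiffs (y d₁₂ d₂₃ : V) : V × V × V := (y + d₁₂, y, y - d₂₃)

lemma ofDiffs_self (p : V × V × V) : ofDiffs p.2.1 (p.1 - p.2.1) (p.2.1 - p.2.2) = p := by
  simp [ofDiffs]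

lemma ofDiffs_fst_ne_snd_fst {y d₁₂ d₂₃ : V} (h : d₁₂ ≠ 0) :
    (ofDiffs y d₁₂ d₂₃).1 ≠ (ofDiffs y d₁₂ d₂₃).2.1 := by
  simpa [ofDiffs] using h

lemma ofDiffs_snd_fst_ne_snd_snd {y d₁₂ d₂₃ : V} (h : d₂₃ ≠ 0) :
    (ofDiffs y d₁₂ d₂₃).2.1 ≠ (ofDiffs y d₁₂ d₂₃).2.2 := by
  simp only [ofDiffs]
  rwa [Ne, eq_comm, sub_eq_self]

lemma ofDiffs_fst_ne_snd_snd {y d₁₂ d₂₃ : V} (h : d₁₂ + d₂₃ ≠ 0) :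
    (ofDiffs y d₁₂ d₂₃).1 ≠ (ofDiffs y d₁₂ d₂₃).2.2 := by
  simp only [ofDiffs]
  rwa [Ne, ← sub_eq_zero, add_sub_sub_cancel]

end Configurations

section Tracks

variable {m : ℕ} {Q : Type}

def trackDiff (K : I × Q → Conf2 m) (p : I × Q) : E m := (K p).1.1 - (K p).1.2

lemma trackDiff_ne_zero (K : I × Q → Conf2 m) (p : I × Q) : trackDiff K p ≠ 0 :=
  sub_ne_zero.2 (K p).2

@[fun_prop]
lemma continuous_trackDiff [TopologicalSpace Q] {K : I × Q → Conf2 m} (hK : Continuous K) :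
    Continuous (trackDiff K) := by
  unfold trackDiff; fun_prop

end Tracks

section Construction

variable {m : ℕ} {Q : Type} [TopologicalSpace Q] {P₀ P₁ : C(Q, Conf3 m)}
  (K₁ : ((proj1 m).comp P₀).Homotopy ((proj1 m).comp P₁))
  (K₂ : ((proj2 m).comp P₀).Homotopy ((proj2 m).comp P₁))
  (K₃ : ((proj3 m).comp P₀).Homotopy ((proj3 m).comp P₁))

lemma trackDiff_add_trackDiff_of_endpoint (s : I) (q : Q) (hs : s = 0 ∨ s = 1) :
    trackDiff K₂ (s, q) = trackDiff K₃ (s, q) + trackDiff K₁ (s, q) := by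
  rcases hs with rfl | rfl
  · rw [trackDiff, trackDiff, trackDiff, K₁.apply_zero, K₂.apply_zero, K₃.apply_zero]
    exact (sub_add_sub_cancel _ _ _).symm
  · rw [trackDiff, trackDiff, trackDiff, K₁.apply_one, K₂.apply_one, K₃.apply_one]
    exact (sub_add_sub_cancel _ _ _).symm

-- The middle point follows the second point of the `p₃`-track: `y` of `P₀`, then of `P₁`.
def hexagonalFamily (p : Q × (I × I × I)) : E m × E m × E m :=
  ofDiffs (K₃ (cubeMedian p.2, p.1)).1.2
    (diff₁₂ (trackDiff K₃) (trackDiff K₁) (trackDiff K₂) p)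
    (diff₂₃ (trackDiff K₃) (trackDiff K₁) (trackDiff K₂) p)

variable {K₁ K₂ K₃}

lemma continuous_hexagonalFamily : Continuous (hexagonalFamily K₁ K₂ K₃) := by
  have hu := trackDiff_add_trackDiff_of_endpoint K₁ K₂ K₃
  have h₁ := continuous_trackDiff K₁.continuous
  have h₂ := continuous_trackDiff K₂.continuous
  have h₃ := continuous_trackDiff K₃.continuous
  have hd₁₂ := continuous_diff₁₂ h₃ h₁ h₂ hu
  have hd₂₃ := continuous_diff₂₃ h₃ h₁ h₂ hu
  unfold hexagonalFamily ofDiffs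
  fun_prop

variable {q : Q} {T : I × I × I}

lemma hexagonalFamily_fst_ne_snd_fst (h : T.2.2 = 0 ∨ T.2.2 = 1) :
    (hexagonalFamily K₁ K₂ K₃ (q, T)).1 ≠ (hexagonalFamily K₁ K₂ K₃ (q, T)).2.1 := by
  apply ofDiffs_fst_ne_snd_fst
  rw [diff₁₂_of_face h]
  exact trackDiff_ne_zero _ _

lemma hexagonalFamily_snd_fst_ne_snd_snd (h : T.1 = 0 ∨ T.1 = 1) :
    (hexagonalFamily K₁ K₂ K₃ (q, T)).2.1 ≠ (hexagonalFamily K₁ K₂ K₃ (q, T)).2.2 := by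
  apply ofDiffs_snd_fst_ne_snd_snd
  rw [diff₂₃_of_face h]
  exact trackDiff_ne_zero _ _

lemma hexagonalFamily_fst_ne_snd_snd (h : T.2.1 = 0 ∨ T.2.1 = 1) :
    (hexagonalFamily K₁ K₂ K₃ (q, T)).1 ≠ (hexagonalFamily K₁ K₂ K₃ (q, T)).2.2 := by
  apply ofDiffs_fst_ne_snd_snd
  rw [diff₁₂_add_diff₂₃_of_face (trackDiff_add_trackDiff_of_endpoint K₁ K₂ K₃) h]
  exact trackDiff_ne_zero _ _

lemma hexagonalFamily_mem_conf3 (h : cubeMedian T = 0 ∨ cubeMedian T = 1) :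
    hexagonalFamily K₁ K₂ K₃ (q, T) ∈ Conf3 m := by
  have hu := trackDiff_add_trackDiff_of_endpoint K₁ K₂ K₃
  refine ⟨ofDiffs_fst_ne_snd_fst ?_, ofDiffs_snd_fst_ne_snd_snd ?_, ofDiffs_fst_ne_snd_snd ?_⟩
  · rw [diff₁₂_of_cubeMedian hu h]; exact trackDiff_ne_zero _ _
  · rw [diff₂₃_of_cubeMedian hu h]; exact trackDiff_ne_zero _ _
  · rw [diff₁₂_of_cubeMedian hu h, diff₂₃_of_cubeMedian hu h, ← hu _ _ h]
    exact trackDiff_ne_zero _ _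

lemma hexagonalFamily_mem_thinDiagCompl (T : BdryCube) :
    hexagonalFamily K₁ K₂ K₃ (q, T.1) ∈ ThinDiagCompl m := by
  rintro ⟨h₁₂, h₂₃⟩
  rcases T.2 with h | h | h | h | h | h
  · exact hexagonalFamily_snd_fst_ne_snd_snd (.inl h) h₂₃
  · exact hexagonalFamily_snd_fst_ne_snd_snd (.inr h) h₂₃
  · exact hexagonalFamily_fst_ne_snd_snd (.inl h) (h₁₂.trans h₂₃)
  · exact hexagonalFamily_fst_ne_snd_snd (.inr h) (h₁₂.trans h₂₃)
  · exact hexagonalFamily_fst_ne_snd_fst (.inl h) h₁₂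
  · exact hexagonalFamily_fst_ne_snd_fst (.inr h) h₁₂

lemma hexagonalFamily_eq_of_cubeMedian_eq_zero (h : cubeMedian T = 0) :
    hexagonalFamily K₁ K₂ K₃ (q, T) = P₀ q := by
  have hu := trackDiff_add_trackDiff_of_endpoint K₁ K₂ K₃
  rw [hexagonalFamily, diff₁₂_of_cubeMedian hu (.inl h), diff₂₃_of_cubeMedian hu (.inl h)]
  simp only [h, trackDiff, K₁.apply_zero, K₃.apply_zero]
  exact ofDiffs_self (P₀ q).1

lemma hexagonalFamily_eq_of_cubeMedian_eq_one (h : cubeMedian T = 1) :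
    hexagonalFamily K₁ K₂ K₃ (q, T) = P₁ q := by
  have hu := trackDiff_add_trackDiff_of_endpoint K₁ K₂ K₃
  rw [hexagonalFamily, diff₁₂_of_cubeMedian hu (.inr h), diff₂₃_of_cubeMedian hu (.inr h)]
  simp only [h, trackDiff, K₁.apply_one, K₃.apply_one]
  exact ofDiffs_self (P₁ q).1

variable (K₁ K₂ K₃) in
def hexagonalMap : C(Q × BdryCube, ThinDiagCompl m) where
  toFun p := ⟨hexagonalFamily K₁ K₂ K₃ (p.1, p.2.1), hexagonalFamily_mem_thinDiagCompl p.2⟩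
  continuous_toFun := (continuous_hexagonalFamily.comp
    (continuous_fst.prodMk (continuous_subtype_val.comp continuous_snd))).subtype_mk _

lemma hexagonalMap_corner0 (q : Q) : (hexagonalMap K₁ K₂ K₃ (q, corner0)).1 = (P₀ q).1 :=
  hexagonalFamily_eq_of_cubeMedian_eq_zero (median3_eq_of_eq₁₂ rfl)

lemma hexagonalMap_corner1 (q : Q) : (hexagonalMap K₁ K₂ K₃ (q, corner1)).1 = (P₁ q).1 :=
  hexagonalFamily_eq_of_cubeMedian_eq_one (median3_eq_of_eq₁₂ rfl)

lemma isHexagonal_hexagonalMap : IsHexagonal (hexagonalMap K₁ K₂ K₃) :=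
  ⟨fun _ _ h => hexagonalFamily_fst_ne_snd_fst h,
    fun _ _ h => hexagonalFamily_snd_fst_ne_snd_snd h,
    fun _ _ h => hexagonalFamily_fst_ne_snd_snd h,
    fun _ _ h => hexagonalFamily_mem_conf3 (cubeMedian_eq_zero_or_one_of_edge h)⟩

end Construction

theorem exists_isHexagonal_of_homotopic {m : ℕ} {Q : Type} [TopologicalSpace Q]
    {P₀ P₁ : C(Q, Conf3 m)} (h₁ : ((proj1 m).comp P₀).Homotopic ((proj1 m).comp P₁))
    (h₂ : ((proj2 m).comp P₀).Homotopic ((proj2 m).comp P₁))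
    (h₃ : ((proj3 m).comp P₀).Homotopic ((proj3 m).comp P₁)) :
    ∃ H : C(Q × BdryCube, ThinDiagCompl m), (∀ q, (H (q, corner0)).1 = (P₀ q).1) ∧
      (∀ q, (H (q, corner1)).1 = (P₁ q).1) ∧ IsHexagonal H :=
  let ⟨K₁⟩ := h₁
  let ⟨K₂⟩ := h₂
  let ⟨K₃⟩ := h₃
  ⟨hexagonalMap K₁ K₂ K₃, hexagonalMap_corner0, hexagonalMap_corner1, isHexagonal_hexagonalMap⟩

lemma nonempty_conf3_of_conf2 {m : ℕ} (p : Conf2 m) : Nonempty (Conf3 m) :=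
  ⟨⟨(p.1.1, midpoint ℝ p.1.1 p.1.2, p.1.2), (left_eq_midpoint_iff ℝ).not.2 p.2,
    (midpoint_eq_right_iff ℝ).not.2 p.2, p.2⟩⟩

end HexagonalHomotopy

theorem exists_hexagonal_boundary_cube_homotopy_general
    (m : ℕ) (Q : Type) [TopologicalSpace Q]
    (G : C(Q, Conf3 m))
    (h₁ : ((proj1 m).comp G).Nullhomotopic)
    (h₂ : ((proj2 m).comp G).Nullhomotopic)
    (h₃ : ((proj3 m).comp G).Nullhomotopic) :
    ∃ (H : C(Q × BdryCube, ThinDiagCompl m)) (c : Conf3 m),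
      (∀ q, (H (q, corner0)).1 = (G q).1) ∧
      (∀ q, (H (q, corner1)).1 = c.1) ∧
      IsHexagonal H := by
  rcases isEmpty_or_nonempty Q with hQ | ⟨⟨q₀⟩⟩
  · obtain ⟨p, -⟩ := h₁
    obtain ⟨c⟩ := HexagonalHomotopy.nonempty_conf3_of_conf2 p
    exact ⟨⟨fun x => isEmptyElim x.1, continuous_of_const fun x => isEmptyElim x.1⟩, c,
      isEmptyElim, isEmptyElim, isEmptyElim, isEmptyElim, isEmptyElim, isEmptyElim⟩
  · obtain ⟨H, hH₀, hH₁, hH⟩ := HexagonalHomotopy.exists_isHexagonal_of_homotopic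
      (P₁ := .const Q (G q₀)) (h₁.homotopic_const_apply q₀) (h₂.homotopic_const_apply q₀)
      (h₃.homotopic_const_apply q₀)
    exact ⟨H, G q₀, hH₀, hH₁, hH⟩

/-- **Lemma 2.4.**  If `G : Q → (ℝ^m)³ ∖ (Δ^{1=2} ∪ Δ^{2=3} ∪ Δ^{3=1})` composed
with each projection `pᵢ` forgetting the `i`-th point is null-homotopic, then there
is a hexagonal `∂I³`-homotopy `H` with `H_{(0,0,0)} = G` and `H_{(1,1,1)}` a
constant map into `(ℝ^m)³ ∖ (Δ^{1=2} ∪ Δ^{2=3} ∪ Δ^{3=1})`. -/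
theorem exists_hexagonal_boundary_cube_homotopy
    (m : ℕ) (Q : Type) [TopologicalSpace Q] [CompactSpace Q] [T2Space Q]
    (G : C(Q, Conf3 m))
    (h₁ : ((proj1 m).comp G).Nullhomotopic)
    (h₂ : ((proj2 m).comp G).Nullhomotopic)
    (h₃ : ((proj3 m).comp G).Nullhomotopic) :
    ∃ (H : C(Q × BdryCube, ThinDiagCompl m)) (c : Conf3 m),
      (∀ q, (H (q, corner0)).1 = (G q).1) ∧
      (∀ q, (H (q, corner1)).1 = c.1) ∧
      IsHexagonal H :=
  exists_hexagonal_boundary_cube_homotopy_general m Q G h₁ h₂ h₃
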